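/- arXiv:1212.1669 — 2 statements merged into one kernel-verified Lean document; each statement's English description precedes it below -/
import Mathlib

section
/- Let w₀ be the first eigenfunction (positive on (0, D/2)) of the boundary value problem w'' + σs·w = −μ₀w on [0, D/2] with w'(0) = 0 and w(D/2) = 0, and suppose μ₀ < 0 and 0 < −μ₀ < σ·(D/2). Then v = w₀'/w₀ satisfies v' + v² = −σs − μ₀ with v(0) = 0, has a unique critical point s₀ ∈ (0, D/2), which is a maximum, with v' > 0 on [0, s₀) and v' < 0 on (s₀, D/2), and v(s₀) = √(−μ₀ − σs₀) < √(−μ₀). -/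
/-!
Write `q s = -σ s - μ₀`, so that `w₀'' = q w₀`. Then `v = w₀'/w₀` satisfies the Riccati equation
`v' = q - v² = E / w₀²` with `E = q w₀² - w₀'²`, and `E' = q' w₀² = -σ w₀² < 0`: the energy `E` is
strictly decreasing. It is positive at `0` since `w₀'(0) = 0` and `q 0 = -μ₀ > 0`, and negative
wherever `q < 0`, which happens inside `(0, D/2)` because `-μ₀ < σ D/2`. Its unique zero `s₀` is
where `v'` changes sign from positive to negative, and there `v(s₀)² = q(s₀)`.
-/

open Set

theorem eq_zero_iff_of_pos_iff_of_neg_iff {α β : Type*} [LinearOrder α] [Zero α] [LinearOrder β]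
    {x : α} {s c : β} (hpos : 0 < x ↔ s < c) (hneg : x < 0 ↔ c < s) : x = 0 ↔ s = c := by
  rw [le_antisymm_iff, le_antisymm_iff, ← not_lt, ← not_lt, ← not_lt, ← not_lt, hpos, hneg]
  exact and_comm

theorem isMaxOn_Ico_of_deriv_pos_of_deriv_neg {v : ℝ → ℝ} {a b c : ℝ} (hc : c ∈ Ico a b)
    (hv : ContinuousOn v (Ico a b)) (hpos : ∀ s ∈ Ioo a c, 0 < deriv v s)
    (hneg : ∀ s ∈ Ioo c b, deriv v s < 0) : IsMaxOn v (Ico a b) c := by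
  refine isMaxOn_iff.2 fun s hs => ?_
  rcases le_total s c with h | h
  · have hmono := strictMonoOn_of_deriv_pos (convex_Icc a c)
      (hv.mono (Icc_subset_Ico_right hc.2)) (by rwa [interior_Icc])
    exact hmono.monotoneOn ⟨hs.1, h⟩ ⟨hc.1, le_rfl⟩ h
  · have hanti := strictAntiOn_of_deriv_neg (convex_Ico c b)
      (hv.mono (Ico_subset_Ico_left hc.1)) (by rwa [interior_Ico])
    exact hanti.antitoneOn ⟨le_rfl, hc.2⟩ ⟨h, hs.2⟩ h

def riccatiEnergy (q w w' : ℝ → ℝ) (s : ℝ) : ℝ := q s * w s ^ 2 - w' s ^ 2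

section Riccati

variable {q q' w w' : ℝ → ℝ} {s : ℝ}

theorem hasDerivAt_riccati (hw : HasDerivAt w (w' s) s) (hw' : HasDerivAt w' (q s * w s) s)
    (h0 : w s ≠ 0) :
    HasDerivAt (fun τ => w' τ / w τ) (q s - (w' s / w s) ^ 2) s :=
  (hw'.fun_div hw h0).congr_deriv (by field_simp)

theorem riccati_eq_riccatiEnergy_div (h0 : w s ≠ 0) :
    q s - (w' s / w s) ^ 2 = riccatiEnergy q w w' s / w s ^ 2 := by
  unfold riccatiEnergy
  field_simp

theorem hasDerivAt_riccatiEnergy (hq : HasDerivAt q (q' s) s) (hw : HasDerivAt w (w' s) s)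
    (hw' : HasDerivAt w' (q s * w s) s) :
    HasDerivAt (riccatiEnergy q w w') (q' s * w s ^ 2) s :=
  ((hq.fun_mul (hw.fun_pow 2)).fun_sub (hw'.fun_pow 2)).congr_deriv (by simp; ring)

theorem div_eq_sqrt_of_riccatiEnergy_eq_zero (hE : riccatiEnergy q w w' s = 0) (h0 : w s ≠ 0)
    (hv : 0 ≤ w' s / w s) : w' s / w s = √(q s) := by
  have h := riccati_eq_riccatiEnergy_div (q := q) (w' := w') h0
  rw [hE, zero_div, sub_eq_zero] at h
  rw [h, Real.sqrt_sq hv]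

variable {a b : ℝ}

theorem riccatiEnergy_strictAntiOn (hq : ∀ s ∈ Icc a b, HasDerivAt q (q' s) s)
    (hq' : ∀ s ∈ Ioo a b, q' s < 0) (hw : ∀ s ∈ Icc a b, HasDerivAt w (w' s) s)
    (hw' : ∀ s ∈ Icc a b, HasDerivAt w' (q s * w s) s) (h0 : ∀ s ∈ Ioo a b, w s ≠ 0) :
    StrictAntiOn (riccatiEnergy q w w') (Icc a b) := by
  have hE s (hs : s ∈ Icc a b) := hasDerivAt_riccatiEnergy (hq s hs) (hw s hs) (hw' s hs)
  refine strictAntiOn_of_deriv_neg (convex_Icc a b)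
    (fun s hs => (hE s hs).continuousAt.continuousWithinAt) fun s hs => ?_
  rw [interior_Icc] at hs
  rw [(hE s (Ioo_subset_Icc_self hs)).deriv]
  exact mul_neg_of_neg_of_pos (hq' s hs) (pow_two_pos_of_ne_zero (h0 s hs))

theorem exists_riccatiEnergy_eq_zero (hab : a < b) (hq : ∀ s ∈ Icc a b, HasDerivAt q (q' s) s)
    (hw : ∀ s ∈ Icc a b, HasDerivAt w (w' s) s) (hw' : ∀ s ∈ Icc a b, HasDerivAt w' (q s * w s) s)
    (hqa : 0 < q a) (hqb : q b < 0) (hwa : w a ≠ 0) (hwb : w b ≠ 0) (hw'a : w' a = 0) :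
    ∃ c ∈ Ioo a b, riccatiEnergy q w w' c = 0 := by
  have hcont : ContinuousOn (riccatiEnergy q w w') (Icc a b) := fun s hs =>
    (hasDerivAt_riccatiEnergy (hq s hs) (hw s hs) (hw' s hs)).continuousAt.continuousWithinAt
  refine intermediate_value_Ioo' hab.le hcont ⟨?_, ?_⟩
  · unfold riccatiEnergy
    linarith [mul_neg_of_neg_of_pos hqb (pow_two_pos_of_ne_zero hwb), sq_nonneg (w' b)]
  · unfold riccatiEnergy
    rw [hw'a, zero_pow two_ne_zero, sub_zero]
    exact mul_pos hqa (pow_two_pos_of_ne_zero hwa)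

variable {c : ℝ}

theorem deriv_riccati_pos_iff_and_neg_iff (hq : ∀ s ∈ Icc a b, HasDerivAt q (q' s) s)
    (hq' : ∀ s ∈ Ioo a b, q' s < 0) (hw : ∀ s ∈ Icc a b, HasDerivAt w (w' s) s)
    (hw' : ∀ s ∈ Icc a b, HasDerivAt w' (q s * w s) s) (h0 : ∀ s ∈ Ico a b, w s ≠ 0)
    (hc : c ∈ Icc a b) (hE : riccatiEnergy q w w' c = 0) (hs : s ∈ Ico a b) :
    (0 < deriv (fun τ => w' τ / w τ) s ↔ s < c) ∧
      (deriv (fun τ => w' τ / w τ) s < 0 ↔ c < s) := by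
  have hanti : StrictAntiOn (riccatiEnergy q w w') (Icc a b) :=
    riccatiEnergy_strictAntiOn hq hq' hw hw' fun s hs => h0 s (Ioo_subset_Ico_self hs)
  have hsI := Ico_subset_Icc_self hs
  have hw2 := pow_two_pos_of_ne_zero (h0 s hs)
  rw [(hasDerivAt_riccati (hw s hsI) (hw' s hsI) (h0 s hs)).deriv,
    riccati_eq_riccatiEnergy_div (h0 s hs), div_pos_iff_of_pos_right hw2, div_lt_iff₀ hw2,
    zero_mul, ← hE]
  exact ⟨hanti.lt_iff_gt hc hsI, hanti.lt_iff_gt hsI hc⟩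

end Riccati

theorem hasDerivAt_linearPotential (σ μ s : ℝ) : HasDerivAt (fun s => -(σ * s) - μ) (-σ) s := by
  simpa using ((hasDerivAt_id s).const_mul σ).neg.sub_const μ

theorem exists_riccatiEnergy_linearPotential_eq_zero {w w' : ℝ → ℝ} {σ μ L : ℝ} (hσ : 0 < σ)
    (hμ : μ < 0) (hL : -μ < σ * L)
    (hw : ∀ s ∈ Icc 0 L, HasDerivAt w (w' s) s)
    (hw' : ∀ s ∈ Icc 0 L, HasDerivAt w' ((-(σ * s) - μ) * w s) s)
    (h0 : ∀ s ∈ Ico 0 L, w s ≠ 0) (hw'0 : w' 0 = 0) :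
    ∃ c ∈ Ioo 0 L, riccatiEnergy (fun s => -(σ * s) - μ) w w' c = 0 := by
  obtain ⟨b, hμb, hbL⟩ := exists_between ((div_lt_iff₀' hσ).2 hL)
  have hb : 0 < b := (div_pos (neg_pos.2 hμ) hσ).trans hμb
  have hsub : Icc 0 b ⊆ Icc 0 L := Icc_subset_Icc_right hbL.le
  obtain ⟨c, hc, hEc⟩ := exists_riccatiEnergy_eq_zero (q := fun s => -(σ * s) - μ) hb
    (fun s _ => hasDerivAt_linearPotential σ μ s) (fun s hs => hw s (hsub hs))
    (fun s hs => hw' s (hsub hs)) (by simpa using hμ)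
    (by linarith [(div_lt_iff₀' hσ).1 hμb]) (h0 0 ⟨le_rfl, hb.trans hbL⟩) (h0 b ⟨hb.le, hbL⟩) hw'0
  exact ⟨c, ⟨hc.1, hc.2.trans hbL⟩, hEc⟩

theorem stmt6_general (D σ μ₀ : ℝ) (hσ : 0 < σ)
    (w₀ w₀' w₀'' : ℝ → ℝ)
    (hd1 : ∀ s ∈ Icc 0 (D / 2), HasDerivAt w₀ (w₀' s) s)
    (hd2 : ∀ s ∈ Icc 0 (D / 2), HasDerivAt w₀' (w₀'' s) s)
    (heq : ∀ s ∈ Icc 0 (D / 2), w₀'' s + σ * s * w₀ s = -μ₀ * w₀ s)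
    (hpos : ∀ s ∈ Ico 0 (D / 2), 0 < w₀ s)
    (hend : w₀ (D / 2) = 0)
    (hneu : w₀' 0 = 0)
    (hμneg : μ₀ < 0) (hμ : -μ₀ < σ * (D / 2)) :
    (∀ s ∈ Ico 0 (D / 2),
        HasDerivAt (fun τ => w₀' τ / w₀ τ)
          (-(σ * s) - μ₀ - (w₀' s / w₀ s) ^ 2) s) ∧
    w₀' 0 / w₀ 0 = 0 ∧
    ∃ s₀ ∈ Ioo 0 (D / 2),
      deriv (fun τ => w₀' τ / w₀ τ) s₀ = 0 ∧
      (∀ s ∈ Ioo 0 (D / 2), deriv (fun τ => w₀' τ / w₀ τ) s = 0 → s = s₀) ∧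
      IsMaxOn (fun τ => w₀' τ / w₀ τ) (Icc 0 (D / 2)) s₀ ∧
      (∀ s ∈ Ico 0 (D / 2), s < s₀ → 0 < deriv (fun τ => w₀' τ / w₀ τ) s) ∧
      (∀ s ∈ Ioo s₀ (D / 2), deriv (fun τ => w₀' τ / w₀ τ) s < 0) ∧
      w₀' s₀ / w₀ s₀ = Real.sqrt (-μ₀ - σ * s₀) ∧
      w₀' s₀ / w₀ s₀ < Real.sqrt (-μ₀) := by
  have hw' : ∀ s ∈ Icc 0 (D / 2), HasDerivAt w₀' ((-(σ * s) - μ₀) * w₀ s) s := fun s hs =>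
    (hd2 s hs).congr_deriv (by linear_combination heq s hs)
  have h0 : ∀ s ∈ Ico 0 (D / 2), w₀ s ≠ 0 := fun s hs => (hpos s hs).ne'
  have hv : ∀ s ∈ Ico 0 (D / 2), HasDerivAt (fun τ => w₀' τ / w₀ τ)
      (-(σ * s) - μ₀ - (w₀' s / w₀ s) ^ 2) s := fun s hs =>
    hasDerivAt_riccati (q := fun s => -(σ * s) - μ₀) (hd1 s (Ico_subset_Icc_self hs))
      (hw' s (Ico_subset_Icc_self hs)) (h0 s hs)
  obtain ⟨s₀, hs₀, hE⟩ :=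
    exists_riccatiEnergy_linearPotential_eq_zero hσ hμneg hμ hd1 hw' h0 hneu
  have hs₀' : s₀ ∈ Ico 0 (D / 2) := Ioo_subset_Ico_self hs₀
  have hsign (s : ℝ) (hs : s ∈ Ico 0 (D / 2)) :=
    deriv_riccati_pos_iff_and_neg_iff (q := fun s => -(σ * s) - μ₀)
      (fun s _ => hasDerivAt_linearPotential σ μ₀ s) (fun _ _ => neg_lt_zero.2 hσ) hd1 hw' h0
      (Ioo_subset_Icc_self hs₀) hE hs
  have hzero (s : ℝ) (hs : s ∈ Ico 0 (D / 2)) :=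
    eq_zero_iff_of_pos_iff_of_neg_iff (hsign s hs).1 (hsign s hs).2
  have hmax : IsMaxOn (fun τ => w₀' τ / w₀ τ) (Ico 0 (D / 2)) s₀ :=
    isMaxOn_Ico_of_deriv_pos_of_deriv_neg hs₀'
      (fun s hs => (hv s hs).continuousAt.continuousWithinAt)
      (fun s hs => (hsign s (Ioo_subset_Ico_self (Ioo_subset_Ioo_right hs₀.2.le hs))).1.2 hs.2)
      (fun s hs => (hsign s ⟨hs₀.1.le.trans hs.1.le, hs.2⟩).2.2 hs.1)
  have hv₀ : 0 ≤ w₀' s₀ / w₀ s₀ := by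
    simpa [hneu] using isMaxOn_iff.1 hmax 0 ⟨le_rfl, hs₀.1.trans hs₀.2⟩
  have hsqrt : w₀' s₀ / w₀ s₀ = √(-μ₀ - σ * s₀) := by
    rw [div_eq_sqrt_of_riccatiEnergy_eq_zero hE (h0 s₀ hs₀') hv₀, neg_sub_comm]
  refine ⟨hv, by simp [hneu], s₀, hs₀, (hzero s₀ hs₀').2 rfl,
    fun s hs => (hzero s (Ioo_subset_Ico_self hs)).1, isMaxOn_iff.2 fun s hs => ?_,
    fun s hs => (hsign s hs).1.2, fun s hs => (hsign s ⟨hs₀.1.le.trans hs.1.le, hs.2⟩).2.2 hs.1,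
    hsqrt, ?_⟩
  · rcases hs.2.lt_or_eq with h | rfl
    · exact isMaxOn_iff.1 hmax s ⟨hs.1, h⟩
    · -- `v (D / 2) = w₀' (D / 2) / 0`, which is `0` by Lean's division convention
      simpa [hend] using hv₀
  · rw [hsqrt, Real.sqrt_lt_sqrt_iff_of_pos (neg_pos.2 hμneg)]
    linarith [mul_pos hσ hs₀.1]

/-- Properties of `v = w₀'/w₀` for the first eigenfunction of
`w'' + σs·w = −μ₀w` on `[0, D/2]` with `w'(0) = 0`, `w(D/2) = 0`:
Riccati equation, `v(0) = 0`, unique interior critical point `s₀` which is a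
maximum, monotonicity of `v` on each side, and the value `v(s₀) = √(−μ₀−σs₀)`. -/
theorem stmt6 (D σ μ₀ : ℝ) (hD : 0 < D) (hσ : 0 < σ)
    (w₀ w₀' w₀'' : ℝ → ℝ)
    (hd1 : ∀ s ∈ Icc 0 (D / 2), HasDerivAt w₀ (w₀' s) s)
    (hd2 : ∀ s ∈ Icc 0 (D / 2), HasDerivAt w₀' (w₀'' s) s)
    (hcont : ContinuousOn w₀'' (Icc 0 (D / 2)))
    (heq : ∀ s ∈ Icc 0 (D / 2), w₀'' s + σ * s * w₀ s = -μ₀ * w₀ s)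
    (hpos : ∀ s ∈ Ico 0 (D / 2), 0 < w₀ s)
    (hend : w₀ (D / 2) = 0)
    (hneu : w₀' 0 = 0)
    (hμneg : μ₀ < 0) (hμ : -μ₀ < σ * (D / 2)) :
    (∀ s ∈ Ico 0 (D / 2),
        HasDerivAt (fun τ => w₀' τ / w₀ τ)
          (-(σ * s) - μ₀ - (w₀' s / w₀ s) ^ 2) s) ∧
    w₀' 0 / w₀ 0 = 0 ∧
    ∃ s₀ ∈ Ioo 0 (D / 2),
      deriv (fun τ => w₀' τ / w₀ τ) s₀ = 0 ∧
      (∀ s ∈ Ioo 0 (D / 2), deriv (fun τ => w₀' τ / w₀ τ) s = 0 → s = s₀) ∧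
      IsMaxOn (fun τ => w₀' τ / w₀ τ) (Icc 0 (D / 2)) s₀ ∧
      (∀ s ∈ Ico 0 (D / 2), s < s₀ → 0 < deriv (fun τ => w₀' τ / w₀ τ) s) ∧
      (∀ s ∈ Ioo s₀ (D / 2), deriv (fun τ => w₀' τ / w₀ τ) s < 0) ∧
      w₀' s₀ / w₀ s₀ = Real.sqrt (-μ₀ - σ * s₀) ∧
      w₀' s₀ / w₀ s₀ < Real.sqrt (-μ₀) :=
  stmt6_general D σ μ₀ hσ w₀ w₀' w₀'' hd1 hd2 heq hpos hend hneu hμneg hμ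
end

section
/- Let F : [−D/2, D/2] → ℝ be continuous and let w₀, w₁ ∈ C²([−D/2, D/2]) satisfy wᵢ'' + F wᵢ = −μᵢ wᵢ with μ₀ < μ₁, w₀(±D/2) = w₁(±D/2) = 0, w₀ > 0 on (−D/2, D/2), and suppose ∫ₛ^{D/2} w₀ w₁ > 0 for every s ∈ (−D/2, D/2). Then w₀(s)w₁'(s) − w₁(s)w₀'(s) > 0 for all s ∈ (−D/2, D/2), and hence (w₁/w₀)'(s) > 0 on (−D/2, D/2). -/
open Set MeasureTheory intervalIntegral

/-!
The Wronskian `W = w₀ w₁' - w₁ w₀'` of two solutions of `w'' + F w = -μ w` satisfies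
`W' = (μ₀ - μ₁) w₀ w₁`. Since `W` vanishes at the right endpoint, integrating from `s` gives
`W(s) = (μ₁ - μ₀) ∫ₛ^{D/2} w₀ w₁ > 0`, and `(w₁ / w₀)' = W / w₀²`.
-/

def wronskian (f g f' g' : ℝ → ℝ) (x : ℝ) : ℝ := f x * g' x - g x * f' x

section Wronskian

variable {F f g f' g' f'' g'' : ℝ → ℝ} {μ ν x : ℝ}

theorem hasDerivAt_wronskian_of_eigen (hf : HasDerivAt f (f' x) x)
    (hf' : HasDerivAt f' (f'' x) x) (hg : HasDerivAt g (g' x) x)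
    (hg' : HasDerivAt g' (g'' x) x) (hfeq : f'' x + F x * f x = -μ * f x)
    (hgeq : g'' x + F x * g x = -ν * g x) :
    HasDerivAt (wronskian f g f' g') ((μ - ν) * (f x * g x)) x := by
  refine ((hf.mul hg').sub (hg.mul hf')).congr_deriv ?_
  rw [eq_sub_of_add_eq hfeq, eq_sub_of_add_eq hgeq]
  ring

theorem wronskian_eq_mul_integral_of_eigen {a b : ℝ}
    (hf : ∀ x ∈ uIcc a b, HasDerivAt f (f' x) x)
    (hf' : ∀ x ∈ uIcc a b, HasDerivAt f' (f'' x) x)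
    (hg : ∀ x ∈ uIcc a b, HasDerivAt g (g' x) x)
    (hg' : ∀ x ∈ uIcc a b, HasDerivAt g' (g'' x) x)
    (hfeq : ∀ x ∈ uIcc a b, f'' x + F x * f x = -μ * f x)
    (hgeq : ∀ x ∈ uIcc a b, g'' x + F x * g x = -ν * g x)
    (hb : wronskian f g f' g' b = 0) :
    wronskian f g f' g' a = (ν - μ) * ∫ x in a..b, f x * g x := by
  have hcont : ContinuousOn (fun x => (μ - ν) * (f x * g x)) (uIcc a b) :=
    continuousOn_const.mul <|
      ((HasDerivAt.continuousOn hf).mul (HasDerivAt.continuousOn hg))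
  have hFTC := integral_eq_sub_of_hasDerivAt
    (fun x hx => hasDerivAt_wronskian_of_eigen (hf x hx) (hf' x hx) (hg x hx) (hg' x hx)
      (hfeq x hx) (hgeq x hx)) hcont.intervalIntegrable
  rw [intervalIntegral.integral_const_mul, hb] at hFTC
  linarith

theorem hasDerivAt_div_wronskian (hf : HasDerivAt f (f' x) x) (hg : HasDerivAt g (g' x) x)
    (hx : f x ≠ 0) :
    HasDerivAt (fun y => g y / f y) (wronskian f g f' g' x / f x ^ 2) x :=
  (hg.div hf hx).congr_deriv (by unfold wronskian; ring)

end Wronskian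

theorem stmt11_general (D μ₀ μ₁ : ℝ) (hμ : μ₀ < μ₁)
    (F w₀ w₁ w₀' w₁' w₀'' w₁'' : ℝ → ℝ)
    (h01 : ∀ s ∈ Icc (-(D / 2)) (D / 2), HasDerivAt w₀ (w₀' s) s)
    (h02 : ∀ s ∈ Icc (-(D / 2)) (D / 2), HasDerivAt w₀' (w₀'' s) s)
    (h11 : ∀ s ∈ Icc (-(D / 2)) (D / 2), HasDerivAt w₁ (w₁' s) s)
    (h12 : ∀ s ∈ Icc (-(D / 2)) (D / 2), HasDerivAt w₁' (w₁'' s) s)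
    (heq0 : ∀ s ∈ Icc (-(D / 2)) (D / 2), w₀'' s + F s * w₀ s = -μ₀ * w₀ s)
    (heq1 : ∀ s ∈ Icc (-(D / 2)) (D / 2), w₁'' s + F s * w₁ s = -μ₁ * w₁ s)
    (hbc : w₀ (-(D / 2)) = 0 ∧ w₀ (D / 2) = 0 ∧ w₁ (-(D / 2)) = 0 ∧ w₁ (D / 2) = 0)
    (hpos : ∀ s ∈ Ioo (-(D / 2)) (D / 2), 0 < w₀ s)
    (hint : ∀ s ∈ Ioo (-(D / 2)) (D / 2),
      0 < ∫ τ in s..(D / 2), w₀ τ * w₁ τ) :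
    ∀ s ∈ Ioo (-(D / 2)) (D / 2),
      0 < w₀ s * w₁' s - w₁ s * w₀' s ∧
      0 < deriv (fun τ => w₁ τ / w₀ τ) s := by
  intro s hs
  have hsub : uIcc s (D / 2) ⊆ Icc (-(D / 2)) (D / 2) := by
    rw [uIcc_of_le hs.2.le]
    exact Icc_subset_Icc_left hs.1.le
  have hend : wronskian w₀ w₁ w₀' w₁' (D / 2) = 0 := by
    simp only [wronskian, hbc.2.1, hbc.2.2.2, zero_mul, sub_zero]
  have hW : wronskian w₀ w₁ w₀' w₁' s = (μ₁ - μ₀) * ∫ τ in s..(D / 2), w₀ τ * w₁ τ :=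
    wronskian_eq_mul_integral_of_eigen (fun x hx => h01 x (hsub hx))
      (fun x hx => h02 x (hsub hx)) (fun x hx => h11 x (hsub hx))
      (fun x hx => h12 x (hsub hx)) (fun x hx => heq0 x (hsub hx))
      (fun x hx => heq1 x (hsub hx)) hend
  have hWpos : 0 < wronskian w₀ w₁ w₀' w₁' s := hW ▸ mul_pos (sub_pos.2 hμ) (hint s hs)
  have hw₀ : 0 < w₀ s := hpos s hs
  refine ⟨hWpos, ?_⟩
  rw [(hasDerivAt_div_wronskian (h01 s (Ioo_subset_Icc_self hs))
    (h11 s (Ioo_subset_Icc_self hs)) hw₀.ne').deriv]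
  positivity

/-- If `w₀, w₁` are Dirichlet eigenfunctions of `w'' + Fw = −μw` with
`μ₀ < μ₁`, `w₀ > 0` on the interior, and `∫ₛ^{D/2} w₀w₁ > 0` for all interior
`s`, then the Wronskian `w₀w₁' − w₁w₀'` is positive on the interior, and hence
`(w₁/w₀)' > 0` there. -/
theorem stmt11 (D μ₀ μ₁ : ℝ) (hD : 0 < D) (hμ : μ₀ < μ₁)
    (F w₀ w₁ w₀' w₁' w₀'' w₁'' : ℝ → ℝ)
    (hF : ContinuousOn F (Icc (-(D / 2)) (D / 2)))
    (h01 : ∀ s ∈ Icc (-(D / 2)) (D / 2), HasDerivAt w₀ (w₀' s) s)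
    (h02 : ∀ s ∈ Icc (-(D / 2)) (D / 2), HasDerivAt w₀' (w₀'' s) s)
    (h11 : ∀ s ∈ Icc (-(D / 2)) (D / 2), HasDerivAt w₁ (w₁' s) s)
    (h12 : ∀ s ∈ Icc (-(D / 2)) (D / 2), HasDerivAt w₁' (w₁'' s) s)
    (hc0 : ContinuousOn w₀'' (Icc (-(D / 2)) (D / 2)))
    (hc1 : ContinuousOn w₁'' (Icc (-(D / 2)) (D / 2)))
    (heq0 : ∀ s ∈ Icc (-(D / 2)) (D / 2), w₀'' s + F s * w₀ s = -μ₀ * w₀ s)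
    (heq1 : ∀ s ∈ Icc (-(D / 2)) (D / 2), w₁'' s + F s * w₁ s = -μ₁ * w₁ s)
    (hbc : w₀ (-(D / 2)) = 0 ∧ w₀ (D / 2) = 0 ∧ w₁ (-(D / 2)) = 0 ∧ w₁ (D / 2) = 0)
    (hpos : ∀ s ∈ Ioo (-(D / 2)) (D / 2), 0 < w₀ s)
    (hint : ∀ s ∈ Ioo (-(D / 2)) (D / 2),
      0 < ∫ τ in s..(D / 2), w₀ τ * w₁ τ) :
    ∀ s ∈ Ioo (-(D / 2)) (D / 2),
      0 < w₀ s * w₁' s - w₁ s * w₀' s ∧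
      0 < deriv (fun τ => w₁ τ / w₀ τ) s :=
  stmt11_general D μ₀ μ₁ hμ F w₀ w₁ w₀' w₁' w₀'' w₁'' h01 h02 h11 h12 heq0 heq1 hbc hpos hint
end
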